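/- arXiv:2509.24480 — 7 statements merged into one kernel-verified Lean document; each statement's English description precedes it below -/
import Mathlib

section
/- Let S be a finite subset of the integers that contains at least one positive and at least one negative element. Then the submonoid of (ℤ, +) generated by S is a subgroup, namely the set of all integer multiples of d, where d is the greatest common divisor of the elements of S. -/
lemma span_finset_gcd (S : Finset ℤ) : Ideal.span (S : Set ℤ) = Ideal.span {S.gcd id} := by
  classical
  induction S using Finset.induction with
  | empty => simp [(Ideal.span_singleton_eq_bot (x := (0:ℤ))).mpr rfl]
  | @insert a s _ ih =>
    rw [Finset.gcd_insert, Finset.coe_insert, Ideal.span_insert, ih,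
      ← Ideal.span_insert, ← _root_.span_gcd]
    rfl

lemma mem_closure_int (S : Finset ℤ) (x : ℤ) :
    x ∈ AddSubgroup.closure (S : Set ℤ) ↔ (S.gcd id) ∣ x := by
  rw [← Submodule.span_int_eq_addSubgroupClosure]
  change x ∈ Ideal.span (S : Set ℤ) ↔ _
  rw [span_finset_gcd, Ideal.mem_span_singleton]

/-- If a finite set `S` of integers contains a positive and a negative element,
then the additive submonoid of `ℤ` generated by `S` is a subgroup, namely the set of all
multiples of `d = gcd S`. -/
theorem stmt0 (S : Finset ℤ) (hpos : ∃ x ∈ S, 0 < x) (hneg : ∃ x ∈ S, x < 0) :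
    (∃ H : AddSubgroup ℤ, (H : Set ℤ) = (AddSubmonoid.closure (S : Set ℤ) : Set ℤ)) ∧
      ∀ x : ℤ, x ∈ AddSubmonoid.closure (S : Set ℤ) ↔ (S.gcd id) ∣ x := by
  obtain ⟨a, haS, ha⟩ := hpos
  obtain ⟨b, hbS, hb⟩ := hneg
  set M := AddSubmonoid.closure (S : Set ℤ) with hM
  set u : ℤ := -(a * b) with hu
  have hu0 : 0 < u := by nlinarith
  have haM : a ∈ M := AddSubmonoid.subset_closure haS
  have hbM : b ∈ M := AddSubmonoid.subset_closure hbS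
  have nsmul_int : ∀ (n : ℕ) (x : ℤ), (n : ℤ) * x = n • x := fun n x => by
    simp [nsmul_eq_mul]
  have huM : u ∈ M := by
    have : u = ((-b).toNat : ℤ) * a := by
      rw [Int.toNat_of_nonneg (by omega)]; ring
    rw [this, nsmul_int]
    exact AddSubmonoid.nsmul_mem M haM _
  have hnuM : -u ∈ M := by
    have : -u = (a.toNat : ℤ) * b := by
      rw [Int.toNat_of_nonneg (by omega)]; ring
    rw [this, nsmul_int]
    exact AddSubmonoid.nsmul_mem M hbM _
  have hmul_u : ∀ k : ℤ, k * u ∈ M := by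
    intro k
    rcases le_or_gt 0 k with hk | hk
    · have : k * u = (k.toNat : ℤ) * u := by rw [Int.toNat_of_nonneg hk]
      rw [this, nsmul_int]; exact AddSubmonoid.nsmul_mem M huM _
    · have : k * u = ((-k).toNat : ℤ) * (-u) := by
        rw [Int.toNat_of_nonneg (by omega)]; ring
      rw [this, nsmul_int]; exact AddSubmonoid.nsmul_mem M hnuM _
  have hnegS : ∀ s ∈ S, -s ∈ M := by
    intro s hs
    have hsM : s ∈ M := AddSubmonoid.subset_closure hs
    have : -s = (-s) * u + ((u - 1).toNat : ℤ) * s := by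
      rw [Int.toNat_of_nonneg (by omega)]; ring
    rw [this, nsmul_int]
    exact AddSubmonoid.add_mem M (hmul_u (-s)) (AddSubmonoid.nsmul_mem M hsM _)
  have key : (AddSubgroup.closure (S : Set ℤ)).toAddSubmonoid = M := by
    rw [AddSubgroup.closure_toAddSubmonoid]
    refine le_antisymm (AddSubmonoid.closure_le.2 ?_) (AddSubmonoid.closure_mono ?_)
    · rintro x (hx | hx)
      · exact AddSubmonoid.subset_closure hx
      · rw [Set.mem_neg] at hx
        simpa using hnegS (-x) hx
    · exact Set.subset_union_left
  have hiff : ∀ x : ℤ, x ∈ M ↔ (S.gcd id) ∣ x := by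
    intro x
    rw [← mem_closure_int S x, ← key]
    rfl
  exact ⟨⟨AddSubgroup.closure (S : Set ℤ), by rw [← key]; rfl⟩, hiff⟩
end

section
/- In the free group F on two generators x and y, the submonoid generated by the three elements x, y, and y·x⁻¹·y·x is free of rank 3 on these generators; i.e., the canonical monoid homomorphism from the free monoid on a three-element alphabet sending the letters to x, y, y·x⁻¹·y·x respectively is injective. -/
/-!
The three words `x`, `y`, `y x⁻¹ y x` are reduced and begin and end with positive letters, so
any concatenation of them is again reduced and represents the corresponding product in the free
group. It remains to decode such a concatenation, reading from the left: a letter `x` is the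
generator `x`, and a letter `y` is the third generator exactly when it is followed by `x⁻¹`, since
no generator begins with a negative letter.
-/

namespace FreeGroup

variable {α ι : Type*}

def IsReducedWithPositiveEnds (L : List (α × Bool)) : Prop :=
  IsReduced L ∧ (∀ a ∈ L.head?, a.2 = true) ∧ ∀ a ∈ L.getLast?, a.2 = true

namespace IsReducedWithPositiveEnds

theorem nil : IsReducedWithPositiveEnds ([] : List (α × Bool)) := by
  simp [IsReducedWithPositiveEnds, IsReduced.nil]

theorem append {L₁ L₂ : List (α × Bool)} (h₁ : IsReducedWithPositiveEnds L₁)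
    (h₂ : IsReducedWithPositiveEnds L₂) : IsReducedWithPositiveEnds (L₁ ++ L₂) := by
  obtain ⟨hred₁, hhead₁, hlast₁⟩ := h₁
  obtain ⟨hred₂, hhead₂, hlast₂⟩ := h₂
  refine ⟨hred₁.append hred₂ fun a ha b hb _ => by rw [hlast₁ a ha, hhead₂ b hb], ?_, ?_⟩
  · intro a ha
    rw [List.head?_append, Option.mem_def, Option.or_eq_some_iff] at ha
    rcases ha with ha | ⟨-, ha⟩
    exacts [hhead₁ a ha, hhead₂ a ha]
  · intro a ha
    rw [List.getLast?_append, Option.mem_def, Option.or_eq_some_iff] at ha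
    rcases ha with ha | ⟨-, ha⟩
    exacts [hlast₂ a ha, hlast₁ a ha]

theorem flatten_map {σ : ι → List (α × Bool)}
    (hσ : ∀ i, IsReducedWithPositiveEnds (σ i)) (l : List ι) :
    IsReducedWithPositiveEnds (l.map σ).flatten := by
  induction l with
  | nil => exact nil
  | cons i l ih => exact (hσ i).append ih

end IsReducedWithPositiveEnds

theorem prod_map_mk (σ : ι → List (α × Bool)) (l : List ι) :
    (l.map fun i => mk (σ i)).prod = mk (l.map σ).flatten := by
  induction l with
  | nil => rfl
  | cons i l ih => rw [List.map_cons, List.prod_cons, ih, mul_mk, List.map_cons, List.flatten_cons]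

theorem IsReduced.eq_of_mk_eq [DecidableEq α] {L₁ L₂ : List (α × Bool)} (h₁ : IsReduced L₁)
    (h₂ : IsReduced L₂) (h : mk L₁ = mk L₂) : L₁ = L₂ := by
  rw [← h₁.reduce_eq, ← h₂.reduce_eq, ← toWord_mk, ← toWord_mk, h]

theorem injective_freeMonoidLift_mk [DecidableEq α] {σ : ι → List (α × Bool)}
    (hσ : ∀ i, IsReducedWithPositiveEnds (σ i))
    (hcode : Function.Injective fun l : List ι => (l.map σ).flatten) :
    Function.Injective (FreeMonoid.lift fun i => mk (σ i)) := by
  intro w₁ w₂ h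
  rw [FreeMonoid.lift_apply, FreeMonoid.lift_apply, prod_map_mk, prod_map_mk] at h
  have hred := fun w : FreeMonoid ι => (IsReducedWithPositiveEnds.flatten_map hσ w.toList).1
  exact FreeMonoid.toList.injective <| hcode <| (hred w₁).eq_of_mk_eq (hred w₂) h

end FreeGroup

namespace Stmt1

open FreeGroup

def word : Fin 3 → List (Fin 2 × Bool)
  | 0 => [(0, true)]
  | 1 => [(1, true)]
  | 2 => [(1, true), (0, false), (1, true), (0, true)]

theorem word_isReducedWithPositiveEnds (i : Fin 3) : IsReducedWithPositiveEnds (word i) := by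
  fin_cases i <;> simp [IsReducedWithPositiveEnds, word, FreeGroup.IsReduced]

def decode : List (Fin 2 × Bool) → List (Fin 3)
  | (1, true) :: (0, false) :: (1, true) :: (0, true) :: t => 2 :: decode t
  | (0, true) :: t => 0 :: decode t
  | (1, true) :: t => 1 :: decode t
  | _ => []

theorem decode_flatten_map_word (l : List (Fin 3)) : decode (l.map word).flatten = l := by
  induction l with
  | nil => rfl
  | cons i l ih =>
    have hhead : ∀ a ∈ (l.map word).flatten.head?, a.2 = true :=
      (IsReducedWithPositiveEnds.flatten_map word_isReducedWithPositiveEnds l).2.1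
    rw [List.map_cons, List.flatten_cons]
    fin_cases i
    · simp [word, decode, ih]
    · refine (decode.eq_3 (l.map word).flatten fun t ht => ?_).trans (congrArg _ ih)
      rw [ht] at hhead
      simp at hhead
    · simp [word, decode, ih]

end Stmt1

/-- In the free group on two generators `x = of 0`, `y = of 1`, the submonoid
generated by `x`, `y`, and `y * x⁻¹ * y * x` is free of rank 3 on these generators: the
canonical monoid homomorphism from the free monoid on three letters is injective. -/
theorem stmt1 :
    Function.Injective
      ⇑(FreeMonoid.lift (![FreeGroup.of 0, FreeGroup.of 1,
          FreeGroup.of 1 * (FreeGroup.of 0)⁻¹ * FreeGroup.of 1 * FreeGroup.of 0] :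
        Fin 3 → FreeGroup (Fin 2))) := by
  have hgen : (![FreeGroup.of 0, FreeGroup.of 1,
      FreeGroup.of 1 * (FreeGroup.of 0)⁻¹ * FreeGroup.of 1 * FreeGroup.of 0] :
        Fin 3 → FreeGroup (Fin 2)) = fun i => FreeGroup.mk (Stmt1.word i) := by
    funext i
    fin_cases i
    · rfl
    · rfl
    · simp only [FreeGroup.of, FreeGroup.inv_mk, FreeGroup.mul_mk]
      rfl
  rw [hgen]
  exact FreeGroup.injective_freeMonoidLift_mk Stmt1.word_isReducedWithPositiveEnds
    (Function.LeftInverse.injective Stmt1.decode_flatten_map_word)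
end

section
/- Every finitely generated submonoid of a finitely generated free group is undistorted: if M = ⟨S⟩ (as a monoid) is a submonoid of the free group F on a finite set A, then there exist constants C, D > 0 such that for all g ∈ M, the minimal length of g as a product of elements of S is at most C·|g|_A + D, where |g|_A is the word length of g in F with respect to A ∪ A⁻¹. -/
/-!
Let the flower automaton of `S` have one petal per generator: a loop at the base state `[]`
spelling the reduced word of that generator. Paths from the base to itself read exactly the
words representing products of generators, so a product `s₁ ⋯ sₖ = g` gives such a path reading
a word that freely reduces to the reduced word `w` of `g`. Following Benois, allow between two
letters a jump from `p` to `q` whenever some path from `p` to `q` reads a word trivial in the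
free group; paths with jumps absorb free cancellations, so some such path reads `w` itself.
Only finitely many pairs of states exist, so every jump can be replaced by a real path of
length at most a fixed `B`; the resulting path has length at most `(B + 1)|w| + B`, and it
passes through the base, i.e. uses a generator, at most once per letter.
-/

namespace FlowerAutomaton

open FreeGroup

variable {A : Type*} [DecidableEq A] {S : Finset (FreeGroup A)}
  {p q r : List (A × Bool)} {u w : List (A × Bool)} {x : A × Bool}

variable (S) in
/-- A state is the remainder of a petal still to be read; all petals share the base `[]`. -/
def states : Finset (List (A × Bool)) :=
  insert [] (S.biUnion fun s => (toWord s).tails.toFinset)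

theorem mem_states : p ∈ states S ↔ p = [] ∨ ∃ s ∈ S, p <:+ toWord s := by
  simp [states, List.mem_tails]

variable (S) in
def Step (p : List (A × Bool)) (x : A × Bool) (q : List (A × Bool)) : Prop :=
  p = x :: q ∨ (p = [] ∧ ∃ s ∈ S, toWord s = x :: q)

theorem Step.mem_states (h : Step S p x q) (hp : p ∈ states S) : q ∈ states S := by
  rw [FlowerAutomaton.mem_states] at hp ⊢
  rcases h with rfl | ⟨-, s, hs, hsq⟩
  · rcases hp with h | ⟨s, hs, hsuf⟩
    · exact absurd h (List.cons_ne_nil x q)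
    · exact Or.inr ⟨s, hs, (List.suffix_cons x q).trans hsuf⟩
  · exact Or.inr ⟨s, hs, hsq ▸ List.suffix_cons x q⟩

variable (S) in
inductive Path : List (A × Bool) → List (A × Bool) → List (A × Bool) → Prop
  | nil (q : List (A × Bool)) : Path q [] q
  | cons {p : List (A × Bool)} {x : A × Bool} {q u r : List (A × Bool)} :
      Step S p x q → Path q u r → Path p (x :: u) r

theorem Path.append (h₁ : Path S p u q) (h₂ : Path S q w r) : Path S p (u ++ w) r := by
  induction h₁ with
  | nil => exact h₂
  | cons hs _ ih => exact .cons hs (ih h₂)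

theorem Path.mem_states (h : Path S p u q) (hp : p ∈ states S) : q ∈ states S := by
  induction h with
  | nil => exact hp
  | cons hs _ ih => exact ih (hs.mem_states hp)

theorem path_self (p : List (A × Bool)) : Path S p p [] := by
  induction p with
  | nil => exact .nil []
  | cons x p ih => exact .cons (Or.inl rfl) ih

theorem path_petal {s : FreeGroup A} (hs : s ∈ S) : Path S [] (toWord s) [] := by
  cases hw : toWord s with
  | nil => exact .nil []
  | cons x v => exact .cons (Or.inr ⟨rfl, s, hs, hw⟩) (path_self v)

theorem exists_path_of_forall_mem (l : List (FreeGroup A)) (hl : ∀ a ∈ l, a ∈ S) :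
    ∃ u, Path S [] u [] ∧ mk u = l.prod := by
  induction l with
  | nil => exact ⟨[], .nil [], rfl⟩
  | cons s l ih =>
    obtain ⟨u, hu, hmk⟩ := ih fun a ha => hl a (List.mem_cons_of_mem s ha)
    refine ⟨toWord s ++ u, (path_petal (hl s List.mem_cons_self)).append hu, ?_⟩
    rw [← mul_mk, mk_toWord, hmk, List.prod_cons]

/-- Every departure from the base along a petal reads a letter and contributes a generator. -/
theorem Path.exists_factorization (h : Path S p u r) :
    ∃ l : List (FreeGroup A), (∀ a ∈ l, a ∈ S) ∧ mk p * l.prod = mk u * mk r ∧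
      l.length ≤ u.length := by
  induction h with
  | nil q => exact ⟨[], by simp, by simp [← one_eq_mk]⟩
  | @cons p x q u r hs _ ih =>
    obtain ⟨l, hlS, hmk, hlen⟩ := ih
    have key : mk (x :: q) * l.prod = mk (x :: u) * mk r := by
      change mk [x] * mk q * l.prod = mk [x] * mk u * mk r
      rw [mul_assoc, hmk, mul_assoc]
    rcases hs with rfl | ⟨rfl, s, hs, hsw⟩
    · exact ⟨l, hlS, key, hlen.trans (Nat.le_succ _)⟩
    · refine ⟨s :: l, ?_, ?_, by simpa using hlen⟩
      · simpa [hs] using hlS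
      · rw [← one_eq_mk, one_mul, List.prod_cons, ← key, ← hsw, mk_toWord]

variable (S) in
def JoinedByTrivial (p q : List (A × Bool)) : Prop :=
  ∃ u, Path S p u q ∧ mk u = 1

theorem JoinedByTrivial.refl (p : List (A × Bool)) : JoinedByTrivial S p p :=
  ⟨[], .nil p, rfl⟩

theorem JoinedByTrivial.trans (h₁ : JoinedByTrivial S p q) (h₂ : JoinedByTrivial S q r) :
    JoinedByTrivial S p r := by
  obtain ⟨u₁, hu₁, h1⟩ := h₁
  obtain ⟨u₂, hu₂, h2⟩ := h₂
  exact ⟨u₁ ++ u₂, hu₁.append hu₂, by rw [← mul_mk, h1, h2, one_mul]⟩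

theorem JoinedByTrivial.cancel {q' : List (A × Bool)} (h₁ : Step S p x q)
    (h : JoinedByTrivial S q q') (h₂ : Step S q' (x.1, !x.2) r) : JoinedByTrivial S p r := by
  obtain ⟨u, hu, hmk⟩ := h
  refine ⟨x :: (u ++ [(x.1, !x.2)]), .cons h₁ (hu.append (.cons h₂ (.nil r))), ?_⟩
  change mk [x] * (mk u * mk [(x.1, !x.2)]) = 1
  rw [hmk, one_mul, mul_mk]
  exact Quot.sound (Red.Step.cons_not (L := []))

variable (S) in
/-- Paths of Benois' saturated automaton, in which `JoinedByTrivial` acts as ε-transitions. -/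
inductive SatPath : List (A × Bool) → List (A × Bool) → List (A × Bool) → Prop
  | nil {q q' : List (A × Bool)} : JoinedByTrivial S q q' → SatPath q [] q'
  | cons {p p' : List (A × Bool)} {x : A × Bool} {q u r : List (A × Bool)} :
      JoinedByTrivial S p p' → Step S p' x q → SatPath q u r → SatPath p (x :: u) r

theorem SatPath.joinedByTrivial_head {p' : List (A × Bool)} (h : JoinedByTrivial S p p')
    (hs : SatPath S p' w r) : SatPath S p w r := by
  cases hs with
  | nil h' => exact .nil (h.trans h')
  | cons h' hst hrest => exact .cons (h.trans h') hst hrest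

theorem Path.satPath (h : Path S p u r) : SatPath S p u r := by
  induction h with
  | nil q => exact .nil (.refl q)
  | cons hst _ ih => exact .cons (.refl _) hst ih

theorem SatPath.of_red_step {u₁ u₂ : List (A × Bool)} {a : A} {b : Bool}
    (h : SatPath S p (u₁ ++ (a, b) :: (a, !b) :: u₂) r) : SatPath S p (u₁ ++ u₂) r := by
  induction u₁ generalizing p with
  | nil =>
    obtain _ | ⟨h₁, hst₁, _ | ⟨h₂, hst₂, hrest⟩⟩ := h
    exact hrest.joinedByTrivial_head (h₁.trans (.cancel hst₁ h₂ hst₂))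
  | cons y u₁ ih =>
    obtain _ | ⟨h₁, hst, hrest⟩ := h
    exact .cons h₁ hst (ih hrest)

theorem SatPath.of_red (hred : Red u w) (h : SatPath S p u r) : SatPath S p w r := by
  induction hred with
  | refl => exact h
  | tail _ hstep ih =>
    obtain ⟨⟩ := hstep
    exact ih.of_red_step

variable (S) in
theorem exists_bound_joinedByTrivial :
    ∃ B : ℕ, ∀ p ∈ states S, ∀ q, JoinedByTrivial S p q →
      ∃ u, Path S p u q ∧ mk u = 1 ∧ u.length ≤ B := by
  have hev : ∀ pq ∈ states S ×ˢ states S, ∀ᶠ B in Filter.atTop,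
      JoinedByTrivial S pq.1 pq.2 → ∃ u, Path S pq.1 u pq.2 ∧ mk u = 1 ∧ u.length ≤ B := by
    rintro ⟨p, q⟩ -
    by_cases h : JoinedByTrivial S p q
    · obtain ⟨u, hu, hmk⟩ := h
      filter_upwards [Filter.eventually_ge_atTop u.length] with B hB _ using ⟨u, hu, hmk, hB⟩
    · exact .of_forall fun _ h' => absurd h' h
  obtain ⟨B, hB⟩ := ((Filter.eventually_all_finset _).2 hev).exists
  refine ⟨B, fun p hp q h => hB (p, q) ?_ h⟩
  obtain ⟨u, hu, -⟩ := h
  exact Finset.mem_product.2 ⟨hp, hu.mem_states hp⟩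

theorem SatPath.exists_path_length_le {B : ℕ}
    (hB : ∀ p ∈ states S, ∀ q, JoinedByTrivial S p q →
      ∃ u, Path S p u q ∧ mk u = 1 ∧ u.length ≤ B)
    (h : SatPath S p w r) (hp : p ∈ states S) :
    ∃ u, Path S p u r ∧ mk u = mk w ∧ u.length ≤ (B + 1) * w.length + B := by
  induction h with
  | nil h =>
    obtain ⟨u, hu, hmk, hlen⟩ := hB _ hp _ h
    exact ⟨u, hu, hmk, by simpa using hlen⟩
  | @cons p p' x q w r hj hst _ ih =>
    obtain ⟨u₀, hu₀, hmk₀, hlen₀⟩ := hB _ hp _ hj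
    obtain ⟨u₁, hu₁, hmk₁, hlen₁⟩ := ih (hst.mem_states (hu₀.mem_states hp))
    refine ⟨u₀ ++ x :: u₁, hu₀.append (.cons hst hu₁), ?_, ?_⟩
    · change mk u₀ * (mk [x] * mk u₁) = mk [x] * mk w
      rw [hmk₀, one_mul, hmk₁]
    · simp only [List.length_append, List.length_cons]
      nlinarith

end FlowerAutomaton

theorem stmt5_general {A : Type*} [DecidableEq A] (S : Finset (FreeGroup A)) :
    ∃ C D : ℕ, 0 < C ∧ 0 < D ∧
      ∀ g ∈ Submonoid.closure (S : Set (FreeGroup A)),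
        ∃ l : List (FreeGroup A), (∀ a ∈ l, a ∈ S) ∧ l.prod = g ∧
          l.length ≤ C * (FreeGroup.toWord g).length + D := by
  obtain ⟨B, hB⟩ := FlowerAutomaton.exists_bound_joinedByTrivial S
  refine ⟨B + 1, B + 1, B.succ_pos, B.succ_pos, fun g hg => ?_⟩
  obtain ⟨l₀, hl₀S, rfl⟩ := Submonoid.exists_list_of_mem_closure hg
  obtain ⟨u, hu, hmk⟩ := FlowerAutomaton.exists_path_of_forall_mem l₀ hl₀S
  have hred : FreeGroup.Red u (FreeGroup.toWord l₀.prod) := by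
    rw [← hmk, FreeGroup.toWord_mk]
    exact FreeGroup.reduce.red
  obtain ⟨u', hu', hmk', hlen'⟩ :=
    (hu.satPath.of_red hred).exists_path_length_le hB
      (FlowerAutomaton.mem_states.2 (Or.inl rfl))
  obtain ⟨l, hlS, hlprod, hllen⟩ := hu'.exists_factorization
  refine ⟨l, hlS, ?_, by omega⟩
  rwa [← FreeGroup.one_eq_mk, one_mul, mul_one, hmk', FreeGroup.mk_toWord] at hlprod

/-- Every finitely generated submonoid `M = ⟨S⟩` of a free group on a finite
set `A` is undistorted: there are constants `C, D > 0` such that every `g ∈ M` admits a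
factorization over `S` of length at most `C·|g|_A + D`, where `|g|_A` is the reduced word
length of `g`. -/
theorem stmt5 {A : Type*} [Fintype A] [DecidableEq A] (S : Finset (FreeGroup A)) :
    ∃ C D : ℕ, 0 < C ∧ 0 < D ∧
      ∀ g ∈ Submonoid.closure (S : Set (FreeGroup A)),
        ∃ l : List (FreeGroup A), (∀ a ∈ l, a ∈ S) ∧ l.prod = g ∧
          l.length ≤ C * (FreeGroup.toWord g).length + D :=
  stmt5_general S
end

section
/- Let G be a group with decidable word problem, generated by a finite set X, and let M be the submonoid of G generated by a finite set S. Then membership in M is decidable if and only if there exists a computable non-decreasing function δ : ℕ → ℕ such that every g ∈ M satisfies |g|_S ≤ δ(|g|_X), where |g|_S is the minimal S-length of g in M and |g|_X the word length of g in G over X ∪ X⁻¹. -/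
/-- Evaluation of a word over the generators `gens` (with `true` = generator,
`false` = inverse) in the group `G`. -/
def evalWord {G : Type*} [Group G] {n : ℕ} (gens : Fin n → G)
    (w : List (Fin n × Bool)) : G :=
  (w.map (fun p => if p.2 then gens p.1 else (gens p.1)⁻¹)).prod

/-- Word length of `g` with respect to the group generators `gens` (and their inverses). -/
noncomputable def wordLen {G : Type*} [Group G] {n : ℕ} (gens : Fin n → G) (g : G) : ℕ :=
  sInf {k | ∃ w : List (Fin n × Bool), evalWord gens w = g ∧ w.length = k}

/-- Minimal length of `g` as a product of elements of `S`. -/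
noncomputable def genLen {G : Type*} [Monoid G] (S : Set G) (g : G) : ℕ :=
  sInf {k | ∃ l : List G, (∀ a ∈ l, a ∈ S) ∧ l.prod = g ∧ l.length = k}

/-!
With a solution of the word problem and fixed words over `X` for the elements of `S`, one can
decide whether a given product of elements of `S` equals the element of a given word, hence, by
searching the finitely many candidates, whether that element is a product of at most `t` elements
of `S`. Given a computable distortion `δ`, a word `w` represents an element of `M` iff such a
product with `t = δ |w|` exists. Conversely, a membership test makes the unbounded search for a
shortest `S`-product total, and `δ m` can be taken to be the largest result of that search over
the finitely many words of length at most `m`.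
-/

namespace Computable

variable {α β σ : Type*} [Primcodable α] [Primcodable β] [Primcodable σ]

theorem list_foldl {f : α → List β} {g : α → σ} {h : α → σ × β → σ} (hf : Computable f)
    (hg : Computable g) (hh : Computable₂ h) :
    Computable fun a => (f a).foldl (fun s b => h a (s, b)) (g a) := by
  have hstep : Computable₂ fun a (p : ℕ × σ) =>
      Option.casesOn (motive := fun _ => σ) (f a)[p.1]? p.2 fun b => h a (p.2, b) :=
    (option_casesOn (list_getElem?.comp (hf.comp fst) (fst.comp snd)) (snd.comp snd)
      (hh.comp (fst.comp fst) ((snd.comp (snd.comp fst)).pair snd)).to₂).to₂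
  refine (nat_rec (list_length.comp hf) hg hstep).of_eq fun a => ?_
  suffices ∀ i, Nat.rec (motive := fun _ => σ) (g a)
      (fun i s => Option.casesOn (motive := fun _ => σ) (f a)[i]? s fun b => h a (s, b)) i =
      ((f a).take i).foldl (fun s b => h a (s, b)) (g a) by
    simp only [this, List.take_length]
  intro i
  induction i with
  | zero => rfl
  | succ i ih =>
    rw [List.take_add_one, List.foldl_append, ← ih]
    change Option.casesOn (motive := fun _ => σ) (f a)[i]? _ _ = _
    cases (f a)[i]? <;> rfl

theorem list_foldr {f : α → List β} {g : α → σ} {h : α → β × σ → σ} (hf : Computable f)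
    (hg : Computable g) (hh : Computable₂ h) :
    Computable fun a => (f a).foldr (fun b s => h a (b, s)) (g a) := by
  simpa only [List.foldl_reverse] using
    list_foldl (list_reverse.comp hf) hg (hh.comp fst ((snd.comp snd).pair (fst.comp snd))).to₂

end Computable

namespace ComputablePred

variable {α β : Type*} [Primcodable α] [Primcodable β]

theorem comp {p : β → Prop} {f : α → β} (hp : ComputablePred p) (hf : Computable f) :
    ComputablePred fun a => p (f a) := by
  classical
  exact (hp.decide.comp hf).computablePred

theorem or {p q : α → Prop} (hp : ComputablePred p) (hq : ComputablePred q) :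
    ComputablePred fun a => p a ∨ q a := by
  classical
  exact ((Primrec.or.to_comp.comp hp.decide hq.decide).of_eq fun a => by simp).computablePred

theorem exists_mem_list {p : α → β → Prop} {f : α → List β}
    (hp : ComputablePred fun q : α × β => p q.1 q.2) (hf : Computable f) :
    ComputablePred fun a => ∃ b ∈ f a, p a b := by
  classical
  have hfold := Computable.list_foldr hf (Computable.const false)
    (Primrec.or.to_comp.comp
      (hp.decide.comp (Computable.fst.pair (Computable.fst.comp Computable.snd)))
      (Computable.snd.comp Computable.snd)).to₂
  refine (hfold.of_eq fun a => ?_).computablePred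
  induction f a with
  | nil => simp
  | cons b l ih => simp [ih]

end ComputablePred

section WordsUpTo

variable (β : Type*) [Fintype β]

noncomputable def wordsUpTo : ℕ → List (List β)
  | 0 => [[]]
  | t + 1 => [] :: (Finset.univ.toList.flatMap fun b => (wordsUpTo t).map (b :: ·))

variable {β}

theorem mem_wordsUpTo {l : List β} {t : ℕ} : l ∈ wordsUpTo β t ↔ l.length ≤ t := by
  induction t generalizing l with
  | zero => simp [wordsUpTo]
  | succ t ih =>
    cases l with
    | nil => simp [wordsUpTo]
    | cons b l => simp [wordsUpTo, ih]

theorem primrec_wordsUpTo [Primcodable β] : Primrec (wordsUpTo β) := by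
  have hstep : Primrec₂ fun (_ : ℕ) (ls : List (List β)) =>
      [] :: (Finset.univ.toList.flatMap fun b => ls.map (b :: ·)) :=
    (Primrec.list_cons.comp (Primrec.const []) (Primrec.list_flatMap (Primrec.const _)
      (Primrec.list_map (Primrec.snd.comp Primrec.fst)
        (Primrec.list_cons.comp (Primrec.snd.comp Primrec.fst) Primrec.snd).to₂).to₂)).to₂
  refine (Primrec.nat_rec₁ [[]] hstep).of_eq fun t => ?_
  induction t with
  | zero => rfl
  | succ t ih => simp [wordsUpTo, ih]

end WordsUpTo

theorem ComputablePred.exists_length_le {α β : Type*} [Primcodable α] [Primcodable β] [Fintype β]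
    {p : α → List β → Prop} (hp : ComputablePred fun q : α × List β => p q.1 q.2) :
    ComputablePred fun q : α × ℕ => ∃ l : List β, l.length ≤ q.2 ∧ p q.1 l :=
  (ComputablePred.exists_mem_list (p := fun q l => p q.1 l)
      (hp.comp ((Computable.fst.comp Computable.fst).pair Computable.snd))
      (primrec_wordsUpTo.to_comp.comp Computable.snd)).of_eq
    fun q => by simp only [mem_wordsUpTo]

section MaxOverWordsUpTo

variable {β : Type*} [Fintype β] (f : List β → ℕ)

noncomputable def maxOverWordsUpTo (m : ℕ) : ℕ :=
  ((wordsUpTo β m).map f).foldr max ⊥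

theorem le_maxOverWordsUpTo (l : List β) : f l ≤ maxOverWordsUpTo f l.length :=
  List.le_max_of_le (List.mem_map_of_mem (mem_wordsUpTo.2 le_rfl)) le_rfl

theorem monotone_maxOverWordsUpTo : Monotone (maxOverWordsUpTo f) := fun m m' hm =>
  List.max_le_of_forall_le _ _ fun _ hx => by
    obtain ⟨l, hl, rfl⟩ := List.mem_map.1 hx
    exact List.le_max_of_le
      (List.mem_map_of_mem (mem_wordsUpTo.2 ((mem_wordsUpTo.1 hl).trans hm))) le_rfl

theorem computable_maxOverWordsUpTo [Primcodable β] (hf : Computable f) :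
    Computable (maxOverWordsUpTo f) := by
  refine (Computable.list_foldr primrec_wordsUpTo.to_comp (Computable.const ⊥)
    (Primrec.nat_max.to_comp.comp (hf.comp (Computable.fst.comp Computable.snd))
      (Computable.snd.comp Computable.snd)).to₂).of_eq fun m => ?_
  simp only [maxOverWordsUpTo, List.foldr_map]

end MaxOverWordsUpTo

section Words

variable {G : Type*} [Group G] {n : ℕ} (X : Fin n → G)

theorem evalWord_append (u v : List (Fin n × Bool)) :
    evalWord X (u ++ v) = evalWord X u * evalWord X v := by
  simp [evalWord]

def invWord (w : List (Fin n × Bool)) : List (Fin n × Bool) :=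
  (w.map fun p => (p.1, !p.2)).reverse

theorem evalWord_invWord (w : List (Fin n × Bool)) :
    evalWord X (invWord w) = (evalWord X w)⁻¹ := by
  induction w with
  | nil => simp [invWord, evalWord]
  | cons p w ih =>
    obtain ⟨i, b⟩ := p
    cases b <;> simp_all [invWord, evalWord]

theorem primrec_invWord : Primrec (invWord (n := n)) :=
  Primrec.list_reverse.comp (Primrec.list_map Primrec.id
    ((Primrec.fst.comp Primrec.snd).pair (Primrec.not.comp (Primrec.snd.comp Primrec.snd))).to₂)

variable {X}

theorem exists_evalWord_eq (hgen : Subgroup.closure (Set.range X) = ⊤) (g : G) :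
    ∃ w, evalWord X w = g := by
  induction (hgen ▸ Subgroup.mem_top g : g ∈ Subgroup.closure (Set.range X))
    using Subgroup.closure_induction with
  | mem x hx =>
    obtain ⟨i, rfl⟩ := hx
    exact ⟨[(i, true)], by simp [evalWord]⟩
  | one => exact ⟨[], rfl⟩
  | mul x y _ _ hx hy =>
    obtain ⟨u, rfl⟩ := hx
    obtain ⟨v, rfl⟩ := hy
    exact ⟨u ++ v, evalWord_append X u v⟩
  | inv x _ hx =>
    obtain ⟨u, rfl⟩ := hx
    exact ⟨invWord u, evalWord_invWord X u⟩

theorem wordLen_evalWord_le (w : List (Fin n × Bool)) : wordLen X (evalWord X w) ≤ w.length :=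
  Nat.sInf_le ⟨w, rfl, rfl⟩

theorem exists_length_eq_wordLen (hgen : Subgroup.closure (Set.range X) = ⊤) (g : G) :
    ∃ w, evalWord X w = g ∧ w.length = wordLen X g := by
  obtain ⟨w, hw⟩ := exists_evalWord_eq hgen g
  exact Nat.sInf_mem (s := {m | ∃ w, evalWord X w = g ∧ w.length = m}) ⟨_, w, hw, rfl⟩

end Words

section GenLen

variable {M : Type*} [Monoid M] {k : ℕ} (S : Fin k → M)

theorem list_prod_map_mem_closure (l : List (Fin k)) :
    (l.map S).prod ∈ Submonoid.closure (Set.range S) :=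
  Submonoid.list_prod_mem _ fun _ hx => by
    obtain ⟨i, _, rfl⟩ := List.mem_map.1 hx
    exact Submonoid.subset_closure (Set.mem_range_self i)

theorem genLen_list_prod_map_le (l : List (Fin k)) :
    genLen (Set.range S) (l.map S).prod ≤ l.length :=
  Nat.sInf_le ⟨l.map S, by simp, rfl, List.length_map S⟩

variable {S}

theorem exists_length_eq_genLen {g : M} (hg : g ∈ Submonoid.closure (Set.range S)) :
    ∃ l : List (Fin k), (l.map S).prod = g ∧ l.length = genLen (Set.range S) g := by
  obtain ⟨L, hLS, hL⟩ := Submonoid.exists_list_of_mem_closure hg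
  obtain ⟨L, hLS, hL, hlen⟩ := Nat.sInf_mem
    (s := {m | ∃ L : List M, (∀ a ∈ L, a ∈ Set.range S) ∧ L.prod = g ∧ L.length = m})
    ⟨_, L, hLS, hL, rfl⟩
  obtain ⟨l, rfl⟩ : L ∈ Set.range (List.map S) := Set.range_list_map S ▸ hLS
  exact ⟨l, hL, (List.length_map S).symm.trans hlen⟩

end GenLen

section Decision

variable {G : Type*} [Group G] {n k : ℕ} {X : Fin n → G}

theorem computablePred_list_prod_map_eq_evalWord (hgen : Subgroup.closure (Set.range X) = ⊤)
    (hwp : ComputablePred fun w : List (Fin n × Bool) => evalWord X w = 1) (S : Fin k → G) :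
    ComputablePred fun q : List (Fin n × Bool) × List (Fin k) =>
      (q.2.map S).prod = evalWord X q.1 := by
  choose rep hrep using fun i => exists_evalWord_eq hgen (S i)
  have evalWord_flatMap_rep (l : List (Fin k)) : evalWord X (l.flatMap rep) = (l.map S).prod := by
    induction l with
    | nil => rfl
    | cons i l ih => simp [List.flatMap_cons, evalWord_append, hrep, ih]
  refine (hwp.comp (Primrec.list_append.comp
      (Primrec.list_flatMap Primrec.snd ((Primrec.dom_finite rep).comp Primrec.snd).to₂)
      (primrec_invWord.comp Primrec.fst)).to_comp).of_eq fun q => ?_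
  rw [evalWord_append, evalWord_flatMap_rep, evalWord_invWord, mul_inv_eq_one]

theorem computablePred_exists_length_le_list_prod_map_eq
    (hgen : Subgroup.closure (Set.range X) = ⊤)
    (hwp : ComputablePred fun w : List (Fin n × Bool) => evalWord X w = 1) (S : Fin k → G) :
    ComputablePred fun q : List (Fin n × Bool) × ℕ =>
      ∃ l : List (Fin k), l.length ≤ q.2 ∧ (l.map S).prod = evalWord X q.1 :=
  ComputablePred.exists_length_le (p := fun w l => (l.map S).prod = evalWord X w)
    (computablePred_list_prod_map_eq_evalWord hgen hwp S)

theorem computablePred_mem_closure_of_distortion (hgen : Subgroup.closure (Set.range X) = ⊤)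
    (hwp : ComputablePred fun w : List (Fin n × Bool) => evalWord X w = 1) (S : Fin k → G)
    {δ : ℕ → ℕ} (hδc : Computable δ) (hδm : Monotone δ)
    (hδ : ∀ g ∈ Submonoid.closure (Set.range S), genLen (Set.range S) g ≤ δ (wordLen X g)) :
    ComputablePred fun w : List (Fin n × Bool) =>
      evalWord X w ∈ Submonoid.closure (Set.range S) := by
  refine ((computablePred_exists_length_le_list_prod_map_eq hgen hwp S).comp
    (Computable.id.pair (hδc.comp Computable.list_length))).of_eq fun w => ⟨?_, fun hw => ?_⟩
  · rintro ⟨l, -, hl⟩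
    exact hl ▸ list_prod_map_mem_closure S l
  · obtain ⟨l, hl, hlen⟩ := exists_length_eq_genLen hw
    exact ⟨l, hlen ▸ (hδ _ hw).trans (hδm (wordLen_evalWord_le w)), hl⟩

theorem exists_distortion_of_computablePred_mem_closure
    (hgen : Subgroup.closure (Set.range X) = ⊤)
    (hwp : ComputablePred fun w : List (Fin n × Bool) => evalWord X w = 1) (S : Fin k → G)
    (hmem : ComputablePred fun w : List (Fin n × Bool) =>
      evalWord X w ∈ Submonoid.closure (Set.range S)) :
    ∃ δ : ℕ → ℕ, Computable δ ∧ Monotone δ ∧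
      ∀ g ∈ Submonoid.closure (Set.range S), genLen (Set.range S) g ≤ δ (wordLen X g) := by
  classical
  -- Non-members satisfy `P w 0`, which makes the search for the least `t` total.
  set P : List (Fin n × Bool) → ℕ → Prop := fun w t =>
    evalWord X w ∉ Submonoid.closure (Set.range S) ∨
      ∃ l : List (Fin k), l.length ≤ t ∧ (l.map S).prod = evalWord X w
  have hP : ComputablePred fun q : List (Fin n × Bool) × ℕ => P q.1 q.2 :=
    (hmem.comp Computable.fst).not.or
      (computablePred_exists_length_le_list_prod_map_eq hgen hwp S)
  have hP_ex (w : List (Fin n × Bool)) : ∃ t, P w t := by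
    by_cases hw : evalWord X w ∈ Submonoid.closure (Set.range S)
    · obtain ⟨l, hl, -⟩ := exists_length_eq_genLen hw
      exact ⟨l.length, Or.inr ⟨l, le_rfl, hl⟩⟩
    · exact ⟨0, Or.inl hw⟩
  set shortest := fun w => Nat.find (hP_ex w)
  refine ⟨maxOverWordsUpTo shortest, computable_maxOverWordsUpTo _ (Computable.find hP hP_ex),
    monotone_maxOverWordsUpTo _, fun g hg => ?_⟩
  obtain ⟨w, rfl, hw⟩ := exists_length_eq_wordLen hgen g
  obtain ⟨l, hl, hprod⟩ := (Nat.find_spec (hP_ex w)).resolve_left (not_not.2 hg)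
  calc genLen (Set.range S) (evalWord X w)
      = genLen (Set.range S) (l.map S).prod := by rw [hprod]
    _ ≤ l.length := genLen_list_prod_map_le S l
    _ ≤ shortest w := hl
    _ ≤ maxOverWordsUpTo shortest w.length := le_maxOverWordsUpTo shortest w
    _ = maxOverWordsUpTo shortest (wordLen X (evalWord X w)) := by rw [hw]

end Decision

/-- Let `G` be a group generated by `X` with decidable word problem, and let
`M` be the submonoid generated by a finite set `S`. Then membership in `M` is decidable iff
there exists a computable non-decreasing distortion function `δ` with
`|g|_S ≤ δ(|g|_X)` for all `g ∈ M`. -/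
theorem stmt6 {G : Type*} [Group G] {n k : ℕ}
    (X : Fin n → G) (hgen : Subgroup.closure (Set.range X) = ⊤)
    (hwp : ComputablePred fun w : List (Fin n × Bool) => evalWord X w = 1)
    (S : Fin k → G) :
    (ComputablePred fun w : List (Fin n × Bool) =>
        evalWord X w ∈ Submonoid.closure (Set.range S)) ↔
      ∃ δ : ℕ → ℕ, Computable δ ∧ Monotone δ ∧
        ∀ g ∈ Submonoid.closure (Set.range S),
          genLen (Set.range S) g ≤ δ (wordLen X g) :=
  ⟨exists_distortion_of_computablePred_mem_closure hgen hwp S,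
    fun ⟨_, hδc, hδm, hδ⟩ => computablePred_mem_closure_of_distortion hgen hwp S hδc hδm hδ⟩
end

section
/- Let F = F(a₀, a₁) be the free group of rank 2, let θ be the automorphism of F determined by θ(a₀) = a₁ and θ(a₁) = a₁ a₀⁻¹ a₁, and let X = {θ^i(a₀) : i ∈ ℤ}. Then every element of X is a reduced word whose first and last letters are positive (i.e., lie in {a₀, a₁}), and consequently every finite product of elements of X is already a reduced word (there is no cancellation between consecutive factors). -/
/-!
Put `u = a₁ a₀⁻¹`. Then `θ u = a₁ a₀⁻¹ a₁ a₁⁻¹ = u` and `θ a₀ = a₁ = u a₀`, so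
`θ^i a₀ = u^i a₀` for every `i ∈ ℤ`. Hence each element of `X` is `(a₁ a₀⁻¹)^n a₁` or
`(a₀ a₁⁻¹)^n a₀`, an alternating word that begins and ends with a positive letter. Two words
whose boundary letters are positive cannot cancel against each other, so concatenating the
reduced words of elements of `X` yields a reduced word.
-/

namespace FreeGroup

variable {α : Type*}

def HasPositiveEnds (L : List (α × Bool)) : Prop :=
  (∀ p ∈ L.head?, p.2 = true) ∧ ∀ p ∈ L.getLast?, p.2 = true

theorem HasPositiveEnds.nil : HasPositiveEnds ([] : List (α × Bool)) := by
  simp [HasPositiveEnds]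

theorem HasPositiveEnds.append {L₁ L₂ : List (α × Bool)} (h₁ : HasPositiveEnds L₁)
    (h₂ : HasPositiveEnds L₂) : HasPositiveEnds (L₁ ++ L₂) := by
  constructor
  · cases L₁ with
    | nil => simpa using h₂.1
    | cons x L => simpa using h₁.1
  · rcases List.eq_nil_or_concat L₂ with rfl | ⟨L, x, rfl⟩
    · simpa using h₁.2
    · simpa [← List.append_assoc] using h₂.2

theorem IsReduced.append_of_hasPositiveEnds {L₁ L₂ : List (α × Bool)} (h₁ : IsReduced L₁)
    (h₂ : IsReduced L₂) (e₁ : HasPositiveEnds L₁) (e₂ : HasPositiveEnds L₂) :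
    IsReduced (L₁ ++ L₂) :=
  List.IsChain.append h₁ h₂ fun x hx y hy _ => by rw [e₁.2 x hx, e₂.1 y hy]

theorem isReduced_flatten_of_hasPositiveEnds {Ls : List (List (α × Bool))}
    (h : ∀ L ∈ Ls, IsReduced L ∧ HasPositiveEnds L) :
    IsReduced Ls.flatten ∧ HasPositiveEnds Ls.flatten := by
  induction Ls with
  | nil => exact ⟨.nil, .nil⟩
  | cons L Ls ih =>
    obtain ⟨hL, eL⟩ := h L List.mem_cons_self
    obtain ⟨hLs, eLs⟩ := ih fun L' hL' => h L' (List.mem_cons_of_mem _ hL')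
    exact ⟨hL.append_of_hasPositiveEnds hLs eL eLs, eL.append eLs⟩

theorem prod_eq_mk_flatten_toWord [DecidableEq α] (l : List (FreeGroup α)) :
    l.prod = mk (l.map toWord).flatten := by
  induction l with
  | nil => rfl
  | cons g l ih =>
    rw [List.prod_cons, List.map_cons, List.flatten_cons, ← mul_mk, mk_toWord, ih]

theorem toWord_prod_of_hasPositiveEnds [DecidableEq α] {l : List (FreeGroup α)}
    (h : ∀ g ∈ l, HasPositiveEnds g.toWord) : l.prod.toWord = (l.map toWord).flatten := by
  have hred := isReduced_flatten_of_hasPositiveEnds (Ls := l.map toWord) <| by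
    simpa using fun g hg => ⟨isReduced_toWord, h g hg⟩
  rw [prod_eq_mk_flatten_toWord, toWord_mk, hred.1.reduce_eq]

def alternatingWord (a b : α) : ℕ → List (α × Bool)
  | 0 => [(a, true)]
  | n + 1 => (a, true) :: (b, false) :: alternatingWord a b n

variable (a b : α)

theorem alternatingWord_ne_nil (n : ℕ) : alternatingWord a b n ≠ [] := by
  cases n <;> simp [alternatingWord]

theorem head?_alternatingWord (n : ℕ) : (alternatingWord a b n).head? = some (a, true) := by
  cases n <;> rfl

theorem getLast?_alternatingWord (n : ℕ) :
    (alternatingWord a b n).getLast? = some (a, true) := by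
  induction n with
  | zero => rfl
  | succ n ih =>
    rw [alternatingWord, List.getLast?_cons_cons, List.getLast?_cons,
      ih, Option.getD_some]

theorem hasPositiveEnds_alternatingWord (n : ℕ) : HasPositiveEnds (alternatingWord a b n) := by
  simp [HasPositiveEnds, head?_alternatingWord, getLast?_alternatingWord]

theorem mk_alternatingWord (n : ℕ) :
    mk (alternatingWord a b n) = (of a * (of b)⁻¹) ^ n * of a := by
  induction n with
  | zero => rw [pow_zero, one_mul]; rfl
  | succ n ih =>
    rw [pow_succ', mul_assoc, ← ih]
    rfl

variable {a b}

theorem isReduced_alternatingWord (hab : a ≠ b) (n : ℕ) :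
    IsReduced (alternatingWord a b n) := by
  induction n with
  | zero => exact .singleton
  | succ n ih =>
    refine isReduced_cons_cons.2 ⟨fun h => absurd h hab, List.isChain_cons.2 ⟨?_, ih⟩⟩
    rintro y hy h
    rw [head?_alternatingWord, Option.mem_some_iff] at hy
    subst hy
    exact absurd h hab.symm

theorem toWord_of_mul_inv_of_pow_mul_of [DecidableEq α] (hab : a ≠ b) (n : ℕ) :
    ((of a * (of b)⁻¹) ^ n * of a).toWord = alternatingWord a b n := by
  rw [← mk_alternatingWord, toWord_mk, (isReduced_alternatingWord hab n).reduce_eq]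

end FreeGroup

theorem MulAut.zpow_apply_eq_zpow_mul {G : Type*} [Group G] {θ : MulAut G} {u g : G}
    (hu : θ u = u) (hg : θ g = u * g) (i : ℤ) : (θ ^ i) g = u ^ i * g := by
  have step (j : ℤ) : θ (u ^ j * g) = u ^ (j + 1) * g := by
    rw [map_mul, map_zpow, hu, hg, zpow_add_one, mul_assoc]
  induction i using Int.induction_on with
  | zero => simp
  | succ i ih => rw [zpow_add_one, ← (Commute.self_zpow θ i).eq, mul_apply, ih, step]
  | pred i ih =>
    apply θ.injective
    rw [← mul_apply, ← zpow_one_add, step, show 1 + (-(i : ℤ) - 1) = -i by ring,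
      show -(i : ℤ) - 1 + 1 = -i by ring, ih]

open FreeGroup in
theorem exists_zpow_apply_of_false_eq {θ : MulAut (FreeGroup Bool)}
    (h0 : θ (of false) = of true)
    (h1 : θ (of true) = of true * (of false)⁻¹ * of true) (i : ℤ) :
    ∃ a b : Bool, ∃ n : ℕ, a ≠ b ∧ (θ ^ i) (of false) = (of a * (of b)⁻¹) ^ n * of a := by
  have hu : θ (of true * (of false)⁻¹) = of true * (of false)⁻¹ := by
    rw [_root_.map_mul, _root_.map_inv, h0, h1]; group
  have hg : θ (of false) = of true * (of false)⁻¹ * of false := by rw [h0]; group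
  rw [MulAut.zpow_apply_eq_zpow_mul hu hg]
  obtain ⟨n, rfl | rfl⟩ := Int.eq_nat_or_neg i
  · cases n with
    | zero => exact ⟨false, true, 0, by simp⟩
    | succ n =>
      refine ⟨true, false, n, by simp, ?_⟩
      rw [zpow_natCast, pow_succ, mul_assoc, inv_mul_cancel_right]
  · refine ⟨false, true, n, by simp, ?_⟩
    rw [zpow_neg, zpow_natCast, ← inv_pow, mul_inv_rev, inv_inv]

open FreeGroup in
/-- Let `θ` be the automorphism of `F(a₀,a₁)` with `θ(a₀) = a₁`,
`θ(a₁) = a₁ a₀⁻¹ a₁` (here `a₀ = of false`, `a₁ = of true`), and let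
`X = {θ^i(a₀) : i ∈ ℤ}`. Every element of `X` is a nonempty reduced word whose first and
last letters are positive, and consequently every finite product of elements of `X` is
already reduced: its reduced word is the concatenation of the reduced words of the
factors. -/
theorem stmt12 (θ : MulAut (FreeGroup Bool))
    (h0 : θ (FreeGroup.of false) = FreeGroup.of true)
    (h1 : θ (FreeGroup.of true) =
      FreeGroup.of true * (FreeGroup.of false)⁻¹ * FreeGroup.of true) :
    (∀ i : ℤ, ((θ ^ i) (FreeGroup.of false)).toWord ≠ [] ∧
      (∀ p, ((θ ^ i) (FreeGroup.of false)).toWord.head? = some p → p.2 = true) ∧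
      (∀ p, ((θ ^ i) (FreeGroup.of false)).toWord.getLast? = some p → p.2 = true)) ∧
    (∀ l : List (FreeGroup Bool),
      (∀ g ∈ l, g ∈ Set.range fun i : ℤ => (θ ^ i) (FreeGroup.of false)) →
      (l.prod).toWord = (l.map FreeGroup.toWord).flatten) := by
  have orbit_word (i : ℤ) :
      ∃ a b : Bool, ∃ n : ℕ, ((θ ^ i) (of false)).toWord = alternatingWord a b n := by
    obtain ⟨a, b, n, hab, h⟩ := exists_zpow_apply_of_false_eq h0 h1 i
    exact ⟨a, b, n, by rw [h, toWord_of_mul_inv_of_pow_mul_of hab]⟩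
  have orbit_ends (i : ℤ) : HasPositiveEnds ((θ ^ i) (of false)).toWord := by
    obtain ⟨a, b, n, h⟩ := orbit_word i
    exact h ▸ hasPositiveEnds_alternatingWord a b n
  refine ⟨fun i => ⟨?_, (orbit_ends i).1, (orbit_ends i).2⟩, fun l hl => ?_⟩
  · obtain ⟨a, b, n, h⟩ := orbit_word i
    exact h ▸ alternatingWord_ne_nil a b n
  · refine toWord_prod_of_hasPositiveEnds fun g hg => ?_
    obtain ⟨i, rfl⟩ := hl g hg
    exact orbit_ends i
end

section
/- With F = F(a₀,a₁), θ the automorphism with θ(a₀)=a₁, θ(a₁)=a₁a₀⁻¹a₁, and N the submonoid of F generated by {θ^i(a₀) : i ∈ ℤ}: membership in N is decidable; in fact an element γ ∈ F lies in N if and only if γ is a product of elements of the orbit each of whose reduced lengths is at most the reduced length of γ, and there are only finitely many such candidate products to check. -/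
/-!
Write `g = a₁a₀⁻¹`. Since `θ` fixes `g` and sends `gⁱa₀` to `gⁱ⁺¹a₀`, the orbit of `a₀` is the
coset `{gⁱa₀}`, whose elements are the alternating words `a₁a₀⁻¹a₁⋯a₀⁻¹a₁` and `a₀a₁⁻¹a₀⋯a₁⁻¹a₀`.
Reduced words that begin and end with a positive letter and contain no two consecutive inverse
letters concatenate without cancellation and are closed under concatenation. Hence `N` consists
of such words, and reduced length is additive along products of orbit elements, which bounds the
length of every factor and the number of factors by `|γ|`. Conversely such a word is parsed from
left to right into orbit elements, because `x y⁻¹ z` lies in the coset whenever `x, y, z` do. So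
`γ ∈ N` exactly when the reduced word of `γ` has this shape, which is a primitive recursive test.
-/

open List

theorem List.finite_setOf_length_le_of_forall_mem {α : Type*} {s : Set α} (hs : s.Finite)
    (n : ℕ) : {l : List α | l.length ≤ n ∧ ∀ x ∈ l, x ∈ s}.Finite := by
  have := hs.to_subtype
  refine ((List.finite_length_le s n).image (map Subtype.val)).subset ?_
  rintro l ⟨hn, hl⟩
  lift l to List s using hl
  exact ⟨l, by simpa using hn, rfl⟩

theorem PrimrecRel.list_isChain {α : Type*} [Primcodable α] {R : α → α → Prop}
    (hR : PrimrecRel R) : PrimrecPred (List.IsChain R) := by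
  classical
  have hhead : Primrec₂ fun (a : α) (l : List α) => decide (∀ b ∈ l.head?, R a b) :=
    (Primrec.option_casesOn (Primrec.list_head?.comp Primrec.snd) (Primrec.const true)
      (hR.decide.comp (Primrec.fst.comp Primrec.fst) Primrec.snd).to₂).of_eq fun ⟨a, l⟩ => by
        cases l <;> simp
  refine Primrec.primrecPred ((Primrec.list_rec Primrec.id (Primrec.const true)
      (h := fun _ p => decide (∀ b ∈ p.2.1.head?, R p.1 b) && p.2.2)
      (Primrec.and.comp (hhead.comp (Primrec.fst.comp Primrec.snd)
        (Primrec.fst.comp (Primrec.snd.comp Primrec.snd)))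
        (Primrec.snd.comp (Primrec.snd.comp Primrec.snd))).to₂).of_eq fun l => ?_)
  induction l with
  | nil => simp
  | cons a l ih => cases l <;> simp_all [isChain_cons_cons]

theorem PrimrecPred.forall_mem_head? {α : Type*} [Primcodable α] {p : α → Prop}
    (hp : PrimrecPred p) : PrimrecPred fun l : List α => ∀ a ∈ l.head?, p a :=
  (hp.forall_mem_list.comp (Primrec.list_take.comp (Primrec.const 1) Primrec.id)).of_eq
    fun l => by cases l <;> simp

theorem Primrec.freeGroup_reduce {α : Type*} [Primcodable α] [DecidableEq α] :
    Primrec (FreeGroup.reduce : List (α × Bool) → List (α × Bool)) := by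
  refine (Primrec.list_rec Primrec.id (Primrec.const [])
    (h := fun _ p => List.casesOn p.2.2 [p.1] fun hd tl =>
      if p.1.1 = hd.1 ∧ p.1.2 = !hd.2 then tl else p.1 :: hd :: tl) ?_).of_eq fun _ => rfl
  have hx : Primrec fun q : List (α × Bool) × (α × Bool) × List (α × Bool) × List (α × Bool) =>
      q.2.1 := Primrec.fst.comp Primrec.snd
  have hstep : Primrec₂ fun (q : List (α × Bool) × (α × Bool) × List (α × Bool) × List (α × Bool))
      (p : (α × Bool) × List (α × Bool)) =>
      if q.2.1.1 = p.1.1 ∧ q.2.1.2 = !p.1.2 then p.2 else q.2.1 :: p.1 :: p.2 := by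
    refine Primrec.ite (PrimrecPred.and ?_ ?_) (Primrec.snd.comp Primrec.snd) ?_
    · exact Primrec.eq.comp (Primrec.fst.comp (hx.comp Primrec.fst))
        (Primrec.fst.comp (Primrec.fst.comp Primrec.snd))
    · exact Primrec.eq.comp (Primrec.snd.comp (hx.comp Primrec.fst))
        (Primrec.not.comp (Primrec.snd.comp (Primrec.fst.comp Primrec.snd)))
    · exact Primrec.list_cons.comp (hx.comp Primrec.fst) (Primrec.list_cons.comp
        (Primrec.fst.comp Primrec.snd) (Primrec.snd.comp Primrec.snd))
  exact Primrec.list_casesOn (Primrec.snd.comp (Primrec.snd.comp Primrec.snd))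
    (Primrec.list_cons.comp hx (Primrec.const [])) hstep

namespace FreeGroup

variable {α : Type*}

def IsolatedInverses (w : List (α × Bool)) : Prop :=
  (∀ x ∈ w.head?, x.2) ∧ (∀ x ∈ w.getLast?, x.2) ∧ w.IsChain fun x y => x.2 || y.2

theorem isolatedInverses_nil : IsolatedInverses ([] : List (α × Bool)) := by
  simp [IsolatedInverses]

theorem IsolatedInverses.append {u v : List (α × Bool)} (hu : IsolatedInverses u)
    (hv : IsolatedInverses v) : IsolatedInverses (u ++ v) := by
  obtain ⟨hu₁, hu₂, hu₃⟩ := hu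
  obtain ⟨hv₁, hv₂, hv₃⟩ := hv
  refine ⟨?_, ?_, isChain_append.2 ⟨hu₃, hv₃, fun x hx _ _ => by simp [hu₂ x hx]⟩⟩
  · rcases u with _ | ⟨y, u⟩
    · simpa using hv₁
    · simpa using hu₁
  · rcases v.eq_nil_or_concat with rfl | ⟨v, y, rfl⟩
    · simpa using hu₂
    · simpa using hv₂

theorem IsolatedInverses.of_append_right {u v : List (α × Bool)}
    (h : IsolatedInverses (u ++ v)) (hv : ∀ x ∈ v.head?, x.2) : IsolatedInverses v := by
  obtain ⟨-, h₂, h₃⟩ := h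
  refine ⟨hv, ?_, (isChain_append.1 h₃).2.1⟩
  rcases v.eq_nil_or_concat with rfl | ⟨v, y, rfl⟩
  · simp
  · simpa using h₂

theorem IsolatedInverses.cons_true_cons_false {w : List (α × Bool)} (hw : IsolatedInverses w)
    (hne : w ≠ []) (a b : α) : IsolatedInverses ((a, true) :: (b, false) :: w) := by
  obtain ⟨c, t, rfl⟩ := exists_cons_of_ne_nil hne
  obtain ⟨h₁, h₂, h₃⟩ := hw
  refine ⟨by simp, by simpa using h₂, ?_⟩
  simp_all [isChain_cons_cons]

theorem primrecPred_isolatedInverses [Primcodable α] :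
    PrimrecPred (IsolatedInverses : List (α × Bool) → Prop) := by
  have hpos : PrimrecPred fun x : α × Bool => x.2 = true :=
    Primrec.eq.comp Primrec.snd (Primrec.const true)
  have hrel : PrimrecRel fun x y : α × Bool => (x.2 || y.2) = true :=
    Primrec.eq.comp (Primrec.or.comp (Primrec.snd.comp Primrec.fst)
      (Primrec.snd.comp Primrec.snd)) (Primrec.const true)
  refine (hpos.forall_mem_head?.and ((hpos.forall_mem_head?.comp Primrec.list_reverse).and
    hrel.list_isChain)).of_eq fun w => ?_
  simp [IsolatedInverses, head?_reverse]

theorem mk_cons_true (a : α) (w : List (α × Bool)) : mk ((a, true) :: w) = of a * mk w :=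
  (mul_mk (L₁ := [(a, true)])).symm

theorem mk_cons_false (a : α) (w : List (α × Bool)) :
    mk ((a, false) :: w) = (of a)⁻¹ * mk w :=
  (mul_mk (L₁ := [(a, false)])).symm

section Parse

variable {S : Set (FreeGroup α)} (hof : ∀ a, of a ∈ S)
  (hS : ∀ x ∈ S, ∀ y ∈ S, ∀ z ∈ S, x * y⁻¹ * z ∈ S)
include hof hS

/-- The carry `s` is the part of the word read so far that still has to be glued, through an
inverse letter, to the next factor. -/
theorem mul_mk_mem_closure : ∀ {a : α} {w : List (α × Bool)},
    IsolatedInverses ((a, true) :: w) → ∀ s ∈ S, s * mk w ∈ Submonoid.closure S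
  | _, [], _, s, hs => by simpa [← one_eq_mk] using Submonoid.subset_closure hs
  | a, (b, true) :: w, hw, s, hs => by
    rw [mk_cons_true]
    exact mul_mem (Submonoid.subset_closure hs)
      (mul_mk_mem_closure (hw.of_append_right (u := [(a, true)]) (by simp)) _ (hof b))
  | _, [(b, false)], hw, _, _ => by simp [IsolatedInverses] at hw
  | _, (b, false) :: (c, false) :: w, hw, _, _ => by
    simp [IsolatedInverses, isChain_cons_cons] at hw
  | a, (b, false) :: (c, true) :: w, hw, s, hs => by
    rw [mk_cons_false, mk_cons_true, ← mul_assoc, ← mul_assoc]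
    exact mul_mk_mem_closure (hw.of_append_right (u := [(a, true), (b, false)]) (by simp)) _
      (hS _ hs _ (hof b) _ (hof c))

theorem mk_mem_closure_of_isolatedInverses :
    ∀ {w : List (α × Bool)}, IsolatedInverses w → mk w ∈ Submonoid.closure S
  | [], _ => by rw [← one_eq_mk]; exact one_mem _
  | (a, true) :: w, hw => by
    rw [mk_cons_true]
    exact mul_mk_mem_closure hof hS hw _ (hof a)
  | (a, false) :: w, hw => by simp [IsolatedInverses] at hw

end Parse

variable [DecidableEq α]

theorem toWord_mul_eq_append {x y : FreeGroup α} (hx : ∀ a ∈ x.toWord.getLast?, a.2)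
    (hy : ∀ a ∈ y.toWord.head?, a.2) : (x * y).toWord = x.toWord ++ y.toWord := by
  rw [toWord_mul]
  refine IsReduced.reduce_eq (isChain_append.2 ⟨isReduced_toWord, isReduced_toWord, ?_⟩)
  intro a ha b hb _
  rw [hx a ha, hy b hb]

variable (α) in
def isolatedInversesSubmonoid : Submonoid (FreeGroup α) where
  carrier := {x | IsolatedInverses x.toWord}
  one_mem' := by simpa using isolatedInverses_nil
  mul_mem' {x y} hx hy := by
    show IsolatedInverses (x * y).toWord
    rw [toWord_mul_eq_append hx.2.1 hy.1]
    exact hx.append hy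

theorem mem_isolatedInversesSubmonoid {x : FreeGroup α} :
    x ∈ isolatedInversesSubmonoid α ↔ IsolatedInverses x.toWord := Iff.rfl

theorem toWord_list_prod {l : List (FreeGroup α)}
    (hl : ∀ x ∈ l, x ∈ isolatedInversesSubmonoid α) :
    l.prod.toWord = (l.map toWord).flatten := by
  induction l with
  | nil => simp
  | cons x l ih =>
    have hx := hl x mem_cons_self
    have hl' : ∀ y ∈ l, y ∈ isolatedInversesSubmonoid α := fun y hy => hl y (mem_cons_of_mem x hy)
    rw [prod_cons, toWord_mul_eq_append hx.2.1 (list_prod_mem hl').1, ih hl', map_cons,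
      flatten_cons]

theorem norm_list_prod {l : List (FreeGroup α)} (hl : ∀ x ∈ l, x ∈ isolatedInversesSubmonoid α) :
    l.prod.norm = (l.map norm).sum := by
  rw [norm, toWord_list_prod hl, length_flatten, map_map]
  rfl

theorem norm_le_norm_list_prod {l : List (FreeGroup α)}
    (hl : ∀ x ∈ l, x ∈ isolatedInversesSubmonoid α) {x : FreeGroup α} (hx : x ∈ l) :
    x.norm ≤ l.prod.norm :=
  norm_list_prod hl ▸ le_sum_of_mem (mem_map_of_mem hx)

theorem length_le_norm_list_prod {l : List (FreeGroup α)}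
    (hl : ∀ x ∈ l, x ∈ isolatedInversesSubmonoid α) (h1 : ∀ x ∈ l, x ≠ 1) :
    l.length ≤ l.prod.norm := by
  rw [norm_list_prod hl, ← length_map norm]
  refine length_le_sum_of_one_le _ fun n hn => ?_
  obtain ⟨x, hx, rfl⟩ := mem_map.1 hn
  exact Nat.one_le_iff_ne_zero.2 (norm_eq_zero.not.2 (h1 x hx))

theorem finite_setOf_norm_le [Finite α] (n : ℕ) : {x : FreeGroup α | x.norm ≤ n}.Finite :=
  (List.finite_length_le _ n).preimage toWord_injective.injOn

section Factorizations

variable {S : Set (FreeGroup α)} (hS : S ⊆ isolatedInversesSubmonoid α)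
include hS

theorem mem_closure_iff_exists_list_norm_le {γ : FreeGroup α} :
    γ ∈ Submonoid.closure S ↔
      ∃ l : List (FreeGroup α), (∀ x ∈ l, x ∈ S ∧ x.norm ≤ γ.norm) ∧ l.prod = γ := by
  constructor
  · intro hγ
    obtain ⟨l, hl, rfl⟩ := Submonoid.exists_list_of_mem_closure hγ
    exact ⟨l, fun x hx => ⟨hl x hx, norm_le_norm_list_prod (fun y hy => hS (hl y hy)) hx⟩, rfl⟩
  · rintro ⟨l, hl, rfl⟩
    exact list_prod_mem fun x hx => Submonoid.subset_closure (hl x hx).1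

theorem finite_setOf_list_prod_eq [Finite α] (h1 : 1 ∉ S) (γ : FreeGroup α) :
    {l : List (FreeGroup α) | (∀ x ∈ l, x ∈ S) ∧ l.prod = γ}.Finite := by
  refine (List.finite_setOf_length_le_of_forall_mem (finite_setOf_norm_le γ.norm)
    γ.norm).subset ?_
  rintro l ⟨hl, rfl⟩
  have hl' : ∀ x ∈ l, x ∈ isolatedInversesSubmonoid α := fun x hx => hS (hl x hx)
  exact ⟨length_le_norm_list_prod hl' fun x hx h => h1 (h ▸ hl x hx),
    fun x hx => norm_le_norm_list_prod hl' hx⟩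

end Factorizations

theorem toWord_of_mul_inv_of_mul {a b : α} (hab : b ≠ a) {x : FreeGroup α}
    (hx : x.toWord.head? = some (a, true)) :
    (of a * (of b)⁻¹ * x).toWord = (a, true) :: (b, false) :: x.toWord := by
  obtain ⟨t, ht⟩ : ∃ t, x.toWord = (a, true) :: t := by
    rcases h : x.toWord with _ | ⟨y, t⟩ <;> simp_all
  have hred : IsReduced ((a, true) :: (b, false) :: x.toWord) := by
    have := isReduced_toWord (x := x)
    rw [ht] at this ⊢
    simp_all [isReduced_cons_cons, Ne.symm hab]
  rw [← hred.reduce_eq, ← toWord_mk, mk_cons_true, mk_cons_false, mk_toWord, mul_assoc]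

theorem head?_toWord_and_mem_of_alternating {a b : α} (hab : b ≠ a) (k : ℕ) :
    ((of a * (of b)⁻¹) ^ k * of a).toWord.head? = some (a, true) ∧
      (of a * (of b)⁻¹) ^ k * of a ∈ isolatedInversesSubmonoid α := by
  induction k with
  | zero => simp [toWord_of, mem_isolatedInversesSubmonoid, IsolatedInverses]
  | succ k ih =>
    rw [pow_succ', mul_assoc, mem_isolatedInversesSubmonoid, toWord_of_mul_inv_of_mul hab ih.1]
    exact ⟨rfl, ih.2.cons_true_cons_false (ne_nil_of_mem (mem_of_mem_head? ih.1)) a b⟩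

theorem computablePred_mk_mem_isolatedInversesSubmonoid [Primcodable α] :
    ComputablePred fun w : List (α × Bool) => mk w ∈ isolatedInversesSubmonoid α :=
  (primrecPred_isolatedInverses.comp Primrec.freeGroup_reduce).computablePred.of_eq fun w => by
    rw [mem_isolatedInversesSubmonoid, toWord_mk]

theorem zpow_mul_of_false_mem_and_ne_one (i : ℤ) :
    (of true * (of false)⁻¹) ^ i * of false ∈ isolatedInversesSubmonoid Bool ∧
      (of true * (of false)⁻¹) ^ i * of false ≠ 1 := by
  obtain ⟨a, b, hab, k, h⟩ : ∃ a b : Bool, b ≠ a ∧ ∃ k : ℕ,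
      (of true * (of false)⁻¹) ^ i * of false = (of a * (of b)⁻¹) ^ k * of a := by
    obtain ⟨k, rfl | rfl⟩ := Int.eq_nat_or_neg i
    · cases k with
      | zero => exact ⟨false, true, by decide, 0, by simp⟩
      | succ k => exact ⟨true, false, by decide, k, by
          rw [Nat.cast_succ, zpow_add_one, zpow_natCast, mul_assoc, inv_mul_cancel_right]⟩
    · exact ⟨false, true, by decide, k, by
        rw [zpow_neg, zpow_natCast, ← inv_pow, mul_inv_rev, inv_inv]⟩
  rw [h]
  refine ⟨(head?_toWord_and_mem_of_alternating hab k).2, fun h1 => ?_⟩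
  simpa [h1] using (head?_toWord_and_mem_of_alternating hab k).1

section Orbit

variable {θ : MulAut (FreeGroup Bool)} (h0 : θ (of false) = of true)
  (h1 : θ (of true) = of true * (of false)⁻¹ * of true)
include h0 h1

theorem zpow_apply_of_false (i : ℤ) :
    (θ ^ i) (of false) = (of true * (of false)⁻¹) ^ i * of false := by
  have step (i : ℤ) : θ ((of true * (of false)⁻¹) ^ i * of false) =
      (of true * (of false)⁻¹) ^ (i + 1) * of false := by
    rw [_root_.map_mul, map_zpow, _root_.map_mul, _root_.map_inv, h0, h1, mul_inv_cancel_right,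
      zpow_add_one, mul_assoc, inv_mul_cancel_right]
  induction i using Int.induction_on with
  | zero => simp
  | succ i ih => rw [add_comm (i : ℤ) 1, zpow_one_add, MulAut.mul_apply, ih, step, add_comm]
  | pred i ih =>
    apply θ.injective
    rw [← MulAut.mul_apply, ← zpow_one_add, step, add_sub_cancel, sub_add_cancel, ih]

theorem orbit_subset_isolatedInversesSubmonoid :
    Set.range (fun i : ℤ => (θ ^ i) (of false)) ⊆ isolatedInversesSubmonoid Bool := by
  rintro _ ⟨i, rfl⟩
  dsimp only
  rw [zpow_apply_of_false h0 h1]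
  exact (zpow_mul_of_false_mem_and_ne_one i).1

theorem one_notMem_orbit : (1 : FreeGroup Bool) ∉ Set.range fun i : ℤ => (θ ^ i) (of false) := by
  rintro ⟨i, hi⟩
  dsimp only at hi
  rw [zpow_apply_of_false h0 h1] at hi
  exact (zpow_mul_of_false_mem_and_ne_one i).2 hi

theorem closure_orbit_eq :
    Submonoid.closure (Set.range fun i : ℤ => (θ ^ i) (of false)) =
      isolatedInversesSubmonoid Bool := by
  refine le_antisymm (Submonoid.closure_le.2 (orbit_subset_isolatedInversesSubmonoid h0 h1))
    fun x hx => mk_toWord (x := x) ▸ mk_mem_closure_of_isolatedInverses ?_ ?_ hx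
  · rintro (_ | _)
    · exact ⟨0, by simp⟩
    · exact ⟨1, by simp [h0]⟩
  · rintro _ ⟨i, rfl⟩ _ ⟨j, rfl⟩ _ ⟨k, rfl⟩
    refine ⟨i - j + k, ?_⟩
    simp only [zpow_apply_of_false h0 h1]
    group

end Orbit

end FreeGroup

/-- With `θ` the automorphism of `F(a₀,a₁)` given by `θ(a₀)=a₁`,
`θ(a₁)=a₁a₀⁻¹a₁` (`a₀ = of false`, `a₁ = of true`) and `N` the submonoid generated by the
orbit `X = {θ^i(a₀) : i ∈ ℤ}`: membership in `N` is decidable; moreover `γ ∈ N` iff `γ` is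
a product of orbit elements each of reduced length at most the reduced length of `γ`, and
there are only finitely many such candidate products. -/
theorem stmt13 (θ : MulAut (FreeGroup Bool))
    (h0 : θ (FreeGroup.of false) = FreeGroup.of true)
    (h1 : θ (FreeGroup.of true) =
      FreeGroup.of true * (FreeGroup.of false)⁻¹ * FreeGroup.of true) :
    ComputablePred (fun w : List (Bool × Bool) =>
      FreeGroup.mk w ∈
        Submonoid.closure (Set.range fun i : ℤ => (θ ^ i) (FreeGroup.of false))) ∧
    (∀ γ : FreeGroup Bool,
      (γ ∈ Submonoid.closure (Set.range fun i : ℤ => (θ ^ i) (FreeGroup.of false)) ↔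
        ∃ l : List (FreeGroup Bool),
          (∀ g ∈ l, (∃ i : ℤ, (θ ^ i) (FreeGroup.of false) = g) ∧
            g.toWord.length ≤ γ.toWord.length) ∧
          l.prod = γ) ∧
      {l : List (FreeGroup Bool) |
        (∀ g ∈ l, (∃ i : ℤ, (θ ^ i) (FreeGroup.of false) = g) ∧
          g.toWord.length ≤ γ.toWord.length) ∧ l.prod = γ}.Finite) := by
  have hS := FreeGroup.orbit_subset_isolatedInversesSubmonoid h0 h1
  refine ⟨?_, fun γ => ⟨FreeGroup.mem_closure_iff_exists_list_norm_le hS, ?_⟩⟩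
  · rw [FreeGroup.closure_orbit_eq h0 h1]
    exact FreeGroup.computablePred_mk_mem_isolatedInversesSubmonoid
  · exact (FreeGroup.finite_setOf_list_prod_eq hS (FreeGroup.one_notMem_orbit h0 h1) γ).subset
      fun l hl => ⟨fun x hx => (hl.1 x hx).1, hl.2⟩
end

section
/- Let G be a group generated by a finite set X, M the submonoid of G generated by a finite set S, and G' a group generated by a finite set X', with M' a submonoid of G' generated by a finite set S' with respect to which M' is graded. Suppose φ : G → G' is a group homomorphism with φ(S) ⊆ S'. If λ' : ℕ → ℕ is a non-decreasing function satisfying λ_{S'}(h) ≤ λ'(|h|_{X'}) for all h ∈ M', then, with C = max{|φ(x)|_{X'} : x ∈ X}, M is graded with respect to S and λ_S(g) ≤ λ'(C·|g|_X) for all g ∈ M. -/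
/-!
A factorization of `g` over `S` is mapped by `φ` to a factorization of `φ g` over `S'` of the
same length, so its length is at most `λ'(|φ g|_{X'})`. Since `|·|_{X'}` is subadditive and
`|φ x|_{X'} ≤ C` for every letter `x` of `X ∪ X⁻¹`, we get `|φ g|_{X'} ≤ C·|g|_X`, and
monotonicity of `λ'` gives the bound. Factorizations over the finite set `S` of bounded length
are finitely many, so `M` is graded.
-/

/-- Word length of `g` with respect to the generating set `Y ∪ Y⁻¹`. -/
noncomputable def wlen {G : Type*} [Group G] (Y : Set G) (g : G) : ℕ :=
  sInf {k | ∃ l : List G, (∀ a ∈ l, a ∈ Y ∨ a⁻¹ ∈ Y) ∧ l.prod = g ∧ l.length = k}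

/-- The set of factorizations of `g` as products of elements of `S`. -/
def Exprs {M : Type*} [Monoid M] (S : Set M) (g : M) : Set (List M) :=
  {l | (∀ a ∈ l, a ∈ S) ∧ l.prod = g}

/-- A monoid is graded with respect to `S` if every element has only finitely many
factorizations over `S`. -/
def IsGraded {M : Type*} [Monoid M] (S : Set M) : Prop :=
  ∀ g : M, (Exprs S g).Finite

section WordLength

variable {G : Type*} [Group G] {Y : Set G}

theorem exists_list_prod_eq_of_mem_closure {g : G} (hg : g ∈ Subgroup.closure Y) :
    ∃ l : List G, (∀ a ∈ l, a ∈ Y ∨ a⁻¹ ∈ Y) ∧ l.prod = g := by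
  rw [← Subgroup.mem_toSubmonoid, Subgroup.closure_toSubmonoid] at hg
  exact Submonoid.exists_list_of_mem_closure hg

theorem exists_list_length_eq_wlen {g : G} (hg : g ∈ Subgroup.closure Y) :
    ∃ l : List G, (∀ a ∈ l, a ∈ Y ∨ a⁻¹ ∈ Y) ∧ l.prod = g ∧
      l.length = wlen Y g := by
  obtain ⟨l, hlY, hl⟩ := exists_list_prod_eq_of_mem_closure hg
  exact Nat.sInf_mem
    (s := {k | ∃ l : List G, (∀ a ∈ l, a ∈ Y ∨ a⁻¹ ∈ Y) ∧ l.prod = g ∧ l.length = k})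
    ⟨l.length, l, hlY, hl, rfl⟩

theorem wlen_le_length {g : G} {l : List G} (hlY : ∀ a ∈ l, a ∈ Y ∨ a⁻¹ ∈ Y)
    (hl : l.prod = g) : wlen Y g ≤ l.length :=
  Nat.sInf_le ⟨l, hlY, hl, rfl⟩

theorem wlen_one : wlen Y 1 = 0 :=
  Nat.le_zero.mp (wlen_le_length (l := []) (by simp) rfl)

theorem wlen_inv_le {g : G} (hg : g ∈ Subgroup.closure Y) : wlen Y g⁻¹ ≤ wlen Y g := by
  obtain ⟨l, hlY, hl, hlen⟩ := exists_list_length_eq_wlen hg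
  rw [← hlen, ← List.length_map (f := Inv.inv), ← List.length_reverse]
  refine wlen_le_length ?_ (by rw [← hl, List.prod_inv_reverse])
  simp only [List.mem_reverse, List.mem_map]
  rintro _ ⟨a, ha, rfl⟩
  simpa [or_comm] using hlY a ha

theorem wlen_mul_le {g h : G} (hg : g ∈ Subgroup.closure Y) (hh : h ∈ Subgroup.closure Y) :
    wlen Y (g * h) ≤ wlen Y g + wlen Y h := by
  obtain ⟨l₁, hl₁Y, hl₁, hlen₁⟩ := exists_list_length_eq_wlen hg
  obtain ⟨l₂, hl₂Y, hl₂, hlen₂⟩ := exists_list_length_eq_wlen hh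
  rw [← hlen₁, ← hlen₂, ← List.length_append]
  refine wlen_le_length (fun a ha => ?_) (by rw [List.prod_append, hl₁, hl₂])
  exact (List.mem_append.mp ha).elim (hl₁Y a) (hl₂Y a)

end WordLength

section Lipschitz

variable {G G' : Type*} [Group G] [Group G'] {X : Set G} {X' : Set G'}

theorem wlen_map_list_prod_le (hgen' : Subgroup.closure X' = ⊤) (φ : G →* G') {C : ℕ}
    (hC : ∀ x ∈ X, wlen X' (φ x) ≤ C) {l : List G}
    (hlX : ∀ a ∈ l, a ∈ X ∨ a⁻¹ ∈ X) :
    wlen X' (φ l.prod) ≤ C * l.length := by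
  have hmem : ∀ g : G', g ∈ Subgroup.closure X' := fun g => hgen' ▸ Subgroup.mem_top g
  induction l with
  | nil => simp [wlen_one]
  | cons a t ih =>
    have ha : wlen X' (φ a) ≤ C := by
      rcases hlX a List.mem_cons_self with ha | ha
      · exact hC a ha
      · calc wlen X' (φ a) = wlen X' (φ a⁻¹)⁻¹ := by rw [map_inv, inv_inv]
          _ ≤ wlen X' (φ a⁻¹) := wlen_inv_le (hmem _)
          _ ≤ C := hC _ ha
    calc wlen X' (φ (a :: t).prod) = wlen X' (φ a * φ t.prod) := by simp
      _ ≤ wlen X' (φ a) + wlen X' (φ t.prod) := wlen_mul_le (hmem _) (hmem _)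
      _ ≤ C + C * t.length := add_le_add ha (ih fun b hb => hlX b (List.mem_cons_of_mem a hb))
      _ = C * (a :: t).length := by rw [List.length_cons]; ring

theorem wlen_map_le (hgen : Subgroup.closure X = ⊤) (hgen' : Subgroup.closure X' = ⊤)
    (φ : G →* G') {C : ℕ} (hC : ∀ x ∈ X, wlen X' (φ x) ≤ C) (g : G) :
    wlen X' (φ g) ≤ C * wlen X g := by
  obtain ⟨l, hlX, rfl, hlen⟩ := exists_list_length_eq_wlen (hgen ▸ Subgroup.mem_top g)
  exact hlen ▸ wlen_map_list_prod_le hgen' φ hC hlX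

end Lipschitz

section Factorizations

variable {M M' : Type*} [Monoid M] [Monoid M']

theorem map_mem_exprs {S : Set M} {S' : Set M'} (f : M →* M') (hfS : ∀ s ∈ S, f s ∈ S')
    {g : M} {l : List M} (hl : l ∈ Exprs S g) : l.map f ∈ Exprs S' (f g) := by
  refine ⟨?_, by rw [List.prod_hom, hl.2]⟩
  simp only [List.mem_map]
  rintro _ ⟨a, ha, rfl⟩
  exact hfS a (hl.1 a ha)

theorem exprs_finite_of_length_le {S : Set M} (hS : S.Finite) {g : M} {n : ℕ}
    (hlen : ∀ l ∈ Exprs S g, l.length ≤ n) : (Exprs S g).Finite := by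
  have : Finite S := hS.to_subtype
  refine ((List.finite_length_le S n).image (List.map Subtype.val)).subset fun l hl => ?_
  refine ⟨l.attachWith _ hl.1, by simpa using hlen l hl, ?_⟩
  simp [List.attachWith, List.map_pmap]

end Factorizations

theorem stmt16_general {G G' : Type*} [Group G] [Group G']
    (X S : Finset G) (X' S' : Finset G')
    (hgenG : Subgroup.closure (X : Set G) = ⊤)
    (hgenG' : Subgroup.closure (X' : Set G') = ⊤)
    (φ : G →* G') (hφS : ∀ s ∈ S, φ s ∈ S')
    (lam' : ℕ → ℕ) (hmono : Monotone lam')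
    (hup' : ∀ h : G', ∀ l ∈ Exprs (S' : Set G') h, l.length ≤ lam' (wlen (X' : Set G') h))
    (C : ℕ) (hC : ∀ x ∈ X, wlen (X' : Set G') (φ x) ≤ C) :
    IsGraded (S : Set G) ∧
      ∀ g : G, ∀ l ∈ Exprs (S : Set G) g,
        l.length ≤ lam' (C * wlen (X : Set G) g) := by
  have hbound : ∀ g : G, ∀ l ∈ Exprs (S : Set G) g,
      l.length ≤ lam' (C * wlen (X : Set G) g) := fun g l hl =>
    calc l.length = (l.map φ).length := (List.length_map _).symm
      _ ≤ lam' (wlen (X' : Set G') (φ g)) := hup' _ _ (map_mem_exprs φ hφS hl)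
      _ ≤ lam' (C * wlen (X : Set G) g) := hmono (wlen_map_le hgenG hgenG' φ hC g)
  exact ⟨fun g => exprs_finite_of_length_le S.finite_toSet (hbound g), hbound⟩

/-- Let `G = ⟨X⟩`, `M` the submonoid generated by `S ⊆ G`; `G' = ⟨X'⟩`,
`M'` the submonoid generated by `S' ⊆ G'`, graded with respect to `S'`. Let `φ : G → G'`
be a homomorphism with `φ(S) ⊆ S'`, and let `λ'` be a non-decreasing upper distortion
function for `M'` in `G'` (every factorization of `h ∈ M'` over `S'` has length at most
`λ'(|h|_{X'})`). If `C` bounds `|φ(x)|_{X'}` for all `x ∈ X`, then `M` is graded with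
respect to `S` and `λ_S(g) ≤ λ'(C·|g|_X)`: every factorization of `g` over `S` has length
at most `λ'(C·|g|_X)`. -/
theorem stmt16 {G G' : Type*} [Group G] [Group G']
    (X S : Finset G) (X' S' : Finset G')
    (hgenG : Subgroup.closure (X : Set G) = ⊤)
    (hgenG' : Subgroup.closure (X' : Set G') = ⊤)
    (hgr' : IsGraded (S' : Set G'))
    (φ : G →* G') (hφS : ∀ s ∈ S, φ s ∈ S')
    (lam' : ℕ → ℕ) (hmono : Monotone lam')
    (hup' : ∀ h : G', ∀ l ∈ Exprs (S' : Set G') h, l.length ≤ lam' (wlen (X' : Set G') h))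
    (C : ℕ) (hC : ∀ x ∈ X, wlen (X' : Set G') (φ x) ≤ C) :
    IsGraded (S : Set G) ∧
      ∀ g : G, ∀ l ∈ Exprs (S : Set G) g,
        l.length ≤ lam' (C * wlen (X : Set G) g) :=
  stmt16_general X S X' S' hgenG hgenG' φ hφS lam' hmono hup' C hC
end
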